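/- arXiv:2206.11753 — 2 statements merged into one kernel-verified Lean document; each statement's English description precedes it below -/
import Mathlib

section
/- The degree of strong reusability is at most the degree of weak reusability: let M be a nonempty finite type of models and f, g, h : M → ℝ (f M representing K(M), g M representing K(x^T, y^T | M), and h M representing K(M | M^S)). Define S_s = {η : ℝ | η > 0 and every minimizer M₀ of f + g satisfies f M₀ ≥ h M₀ + η} and S_w = {η : ℝ | η > 0 and min (f + g) ≥ η + min (h + g)}. If S_s is nonempty and both S_s and S_w are bounded above, then sSup S_s ≤ sSup S_w. -/
/-- The degree of strong reusability is at most the degree of weak reusability.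
Here `f M = K(M)`, `g M = K(x^T, y^T | M)`, `h M = K(M | M^S)`. -/
theorem degree_strong_le_degree_weak {M : Type*} [Fintype M] [Nonempty M]
    (f g h : M → ℝ)
    (Ss Sw : Set ℝ)
    (hSs : Ss = {η : ℝ | η > 0 ∧
      ∀ M₀ : M, (∀ m : M, f M₀ + g M₀ ≤ f m + g m) → f M₀ ≥ h M₀ + η})
    (hSw : Sw = {η : ℝ | η > 0 ∧
      Finset.univ.inf' Finset.univ_nonempty (fun m => f m + g m) ≥
        η + Finset.univ.inf' Finset.univ_nonempty (fun m => h m + g m)})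
    (hne : Ss.Nonempty) (hbs : BddAbove Ss) (hbw : BddAbove Sw) :
    sSup Ss ≤ sSup Sw := by
  have hsub : Ss ⊆ Sw := by
    intro η hη
    rw [hSs] at hη
    obtain ⟨hpos, hmin⟩ := hη
    obtain ⟨m₀, -, hm₀⟩ :=
      Finset.exists_mem_eq_inf' (Finset.univ_nonempty (α := M)) (fun m => f m + g m)
    have hmin₀ : ∀ m : M, f m₀ + g m₀ ≤ f m + g m := by
      intro m
      rw [← hm₀]
      exact Finset.inf'_le _ (Finset.mem_univ m)
    have h1 := hmin m₀ hmin₀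
    rw [hSw]
    refine ⟨hpos, ?_⟩
    rw [hm₀]
    have h2 : Finset.univ.inf' Finset.univ_nonempty (fun m => h m + g m) ≤ h m₀ + g m₀ :=
      Finset.inf'_le _ (Finset.mem_univ m₀)
    linarith
  exact csSup_le_csSup hbw hne hsub
end

section
/- Weak reusability does not imply strong reusability: let the model space be a two-element type {M₁, M₂} and let f, g, h : {M₁, M₂} → ℝ (f representing K(M), g representing K(x^T, y^T | M), h representing K(M | M^S)) satisfy g M₁ = g M₂, f M₁ > f M₂ > 0, h M₁ = 0, and h M₂ = f M₂. Then for every η with 0 < η ≤ f M₂: (i) min (f + g) ≥ η + min (h + g) (weak η-reusability holds), and (ii) there exists a minimizer M₀ of f + g (namely M₂) with f M₀ < h M₀ + η (strong η-reusability fails). -/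
/-- Weak reusability does not imply strong reusability: a two-element
counterexample. The model space is a two-element type `{M₁, M₂}`, with
`f M = K(M)`, `g M = K(x^T, y^T | M)`, `h M = K(M | M^S)` satisfying
`g M₁ = g M₂`, `f M₁ > f M₂ > 0`, `h M₁ = 0`, `h M₂ = f M₂`. Then for every
`0 < η ≤ f M₂`, weak η-reusability holds but strong η-reusability fails:
`M₂` minimizes `f + g` yet `f M₂ < h M₂ + η`. -/
theorem weak_not_strong_counterexample {M : Type*} [Fintype M]
    (M₁ M₂ : M) (hne : M₁ ≠ M₂) (hcover : ∀ m : M, m = M₁ ∨ m = M₂)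
    (f g h : M → ℝ)
    (hg : g M₁ = g M₂) (hf : f M₁ > f M₂) (hf2 : f M₂ > 0)
    (hh1 : h M₁ = 0) (hh2 : h M₂ = f M₂) :
    ∀ η : ℝ, 0 < η → η ≤ f M₂ →
      (Finset.univ.inf' ⟨M₁, Finset.mem_univ M₁⟩ (fun m => f m + g m) ≥
        η + Finset.univ.inf' ⟨M₁, Finset.mem_univ M₁⟩ (fun m => h m + g m)) ∧
      (∃ M₀ : M, (∀ m : M, f M₀ + g M₀ ≤ f m + g m) ∧ f M₀ < h M₀ + η) := by
  intro η hη hηf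
  have hmin : ∀ m : M, f M₂ + g M₂ ≤ f m + g m := by
    intro m
    rcases hcover m with rfl | rfl
    · rw [← hg]; linarith
    · exact le_refl _
  constructor
  · have h1 : Finset.univ.inf' ⟨M₁, Finset.mem_univ M₁⟩ (fun m => f m + g m)
        = f M₂ + g M₂ := by
      apply le_antisymm
      · exact Finset.inf'_le _ (Finset.mem_univ M₂)
      · exact Finset.le_inf' _ _ fun m _ => hmin m
    have h2 : Finset.univ.inf' ⟨M₁, Finset.mem_univ M₁⟩ (fun m => h m + g m)
        = g M₁ := by
      apply le_antisymm
      · have := Finset.inf'_le (fun m => h m + g m) (Finset.mem_univ M₁)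
        simpa [hh1] using this
      · refine Finset.le_inf' _ _ fun m _ => ?_
        rcases hcover m with rfl | rfl
        · simp [hh1]
        · rw [hh2, hg]; linarith
    rw [h1, h2, ← hg]; linarith
  · exact ⟨M₂, hmin, by rw [hh2]; linarith⟩
end
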